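/- arXiv:2209.01018 — 3 statements merged into one kernel-verified Lean document; each statement's English description precedes it below -/
import Mathlib

section
/- Fix $T > 0$, $\gamma_2 \in [1/2, 1)$, and suppose the learning rate satisfies $\alpha_C^{N_2} \le N_2^{-(2-2\gamma_2)}$. Let $(C^i_k)_{1 \le i \le N_2, k \ge 0}$ be real sequences satisfying $|C^i_{k+1}| \le |C^i_k| + K\left(\frac{\alpha_C^{N_2}}{N_2^{\gamma_2}} + \frac{\alpha_C^{N_2}}{N_2^{2\gamma_2}} \sum_{m=1}^{N_2} |C^m_k|\right)$ for a constant $K$, with initial values $|C^i_0| \le K_0$ for all $i$. Then there is a constant $C < \infty$, independent of $N_2$, such that $|C^i_k| \le C$ for all $N_2 \ge 1$, all $1 \le i \le N_2$, and all $0 \le k \le \lfloor T N_2 \rfloor$. -/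
/-!
With `n = N₂`, the learning-rate condition turns the increment into at most
`(K / n) * (1 + mean_m |C^m_k|)`. Hence a common bound `|C^m_k| + 1 ≤ B_k` for all neurons
propagates as `B_{k+1} = (1 + K / n) B_k`, and over `k ≤ T n` steps `(1 + K / n) ^ k ≤ exp (K T)`.
-/

open Finset Real

theorem add_one_le_geometric_of_step_le_mean {ι : Type*} (s : Finset ι) (x : ι → ℕ → ℝ)
    {c B : ℝ} (hc : 0 ≤ c) (h0 : ∀ i ∈ s, x i 0 + 1 ≤ B)
    (hstep : ∀ i ∈ s, ∀ k, x i (k + 1) ≤ x i k + c * (1 + (∑ m ∈ s, x m k) / #s)) :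
    ∀ k, ∀ i ∈ s, x i k + 1 ≤ (1 + c) ^ k * B := by
  intro k
  induction k with
  | zero => simpa using h0
  | succ k ih =>
    intro i hi
    have hcard : (0 : ℝ) < #s := by exact_mod_cast card_pos.mpr ⟨i, hi⟩
    have hmean : (∑ m ∈ s, x m k) / #s ≤ (1 + c) ^ k * B - 1 := by
      rw [div_le_iff₀ hcard, mul_comm]
      simpa using sum_le_card_nsmul s (x · k) _ fun m hm => by linarith [ih m hm]
    calc x i (k + 1) + 1 ≤ x i k + 1 + c * (1 + (∑ m ∈ s, x m k) / #s) := by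
          linarith [hstep i hi k]
      _ ≤ (1 + c) ^ k * B + c * ((1 + c) ^ k * B) := by
          gcongr
          · exact ih i hi
          · linarith
      _ = (1 + c) ^ (k + 1) * B := by ring

theorem one_add_pow_le_exp_mul {c : ℝ} (hc : -1 ≤ c) (k : ℕ) : (1 + c) ^ k ≤ exp (c * k) := by
  calc (1 + c) ^ k ≤ exp c ^ k := by
        gcongr
        · linarith
        · linarith [add_one_le_exp c]
    _ = exp (c * k) := by rw [← exp_nat_mul, mul_comm]

section LearningRate

variable {n α γ : ℝ} (hn : 0 < n) (hα : α ≤ n ^ (-(2 - 2 * γ)))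
include hn hα

theorem div_rpow_le_inv_of_le_rpow (hn1 : 1 ≤ n) (hγ : γ ≤ 1) : α / n ^ γ ≤ n⁻¹ :=
  calc α / n ^ γ ≤ n ^ (-(2 - 2 * γ)) / n ^ γ := by gcongr
    _ = n ^ (γ - 2) := by rw [← rpow_sub hn]; ring_nf
    _ ≤ n ^ (-1 : ℝ) := rpow_le_rpow_of_exponent_le hn1 (by linarith)
    _ = n⁻¹ := rpow_neg_one n

theorem div_rpow_two_mul_le_inv_sq : α / n ^ (2 * γ) ≤ (n ^ 2)⁻¹ :=
  calc α / n ^ (2 * γ) ≤ n ^ (-(2 - 2 * γ)) / n ^ (2 * γ) := by gcongr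
    _ = n ^ (-2 : ℝ) := by rw [← rpow_sub hn]; ring_nf
    _ = (n ^ 2)⁻¹ := by rw [rpow_neg hn.le, rpow_two]

end LearningRate

theorem outer_weights_uniform_bound_general
    (T γ2 K K0 : ℝ) (hT : 0 < T) (hγ2r : γ2 < 1)
    (hK : 0 ≤ K) (hK0 : 0 ≤ K0) :
    ∃ C : ℝ, ∀ N2 : ℕ, 1 ≤ N2 → ∀ (α : ℝ) (Cp : ℕ → ℕ → ℝ),
      0 ≤ α → α ≤ (N2 : ℝ) ^ (-(2 - 2 * γ2)) →
      (∀ i k, 1 ≤ i → i ≤ N2 →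
        |Cp i (k + 1)| ≤ |Cp i k| +
          K * (α / (N2 : ℝ) ^ γ2 +
            α / (N2 : ℝ) ^ (2 * γ2) * ∑ m ∈ Finset.Icc 1 N2, |Cp m k|)) →
      (∀ i, 1 ≤ i → i ≤ N2 → |Cp i 0| ≤ K0) →
      ∀ i k, 1 ≤ i → i ≤ N2 → k ≤ ⌊T * (N2 : ℝ)⌋₊ → |Cp i k| ≤ C := by
  refine ⟨(K0 + 1) * exp (K * T), fun N2 hN2 α Cp _ hα hrec h0 i k hi hiN hk => ?_⟩
  have hn1 : (1 : ℝ) ≤ N2 := by exact_mod_cast hN2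
  have hn : (0 : ℝ) < N2 := by linarith
  have hcard : (#(Icc 1 N2) : ℝ) = N2 := by simp
  have hstep : ∀ m ∈ Icc 1 N2, ∀ j, |Cp m (j + 1)| ≤
      |Cp m j| + K / N2 * (1 + (∑ l ∈ Icc 1 N2, |Cp l j|) / #(Icc 1 N2)) := by
    intro m hm j
    obtain ⟨hm1, hmN⟩ := mem_Icc.mp hm
    have hS : 0 ≤ ∑ l ∈ Icc 1 N2, |Cp l j| := sum_nonneg fun _ _ => abs_nonneg _
    calc |Cp m (j + 1)| ≤ _ := hrec m j hm1 hmN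
      _ ≤ |Cp m j| + K * ((N2 : ℝ)⁻¹ + ((N2 : ℝ) ^ 2)⁻¹ * ∑ l ∈ Icc 1 N2, |Cp l j|) := by
          gcongr
          · exact div_rpow_le_inv_of_le_rpow hn hα hn1 hγ2r.le
          · exact div_rpow_two_mul_le_inv_sq hn hα
      _ = _ := by rw [hcard]; field_simp
  have hgeom := add_one_le_geometric_of_step_le_mean _ (fun m j => |Cp m j|) (B := K0 + 1)
    (by positivity)
    (fun m hm => by linarith [h0 m (mem_Icc.mp hm).1 (mem_Icc.mp hm).2]) hstep k i
    (mem_Icc.mpr ⟨hi, hiN⟩)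
  have hkT : K / N2 * k ≤ K * T := by
    have : (k : ℝ) ≤ T * N2 := (Nat.le_floor_iff (by positivity)).mp hk
    rw [div_mul_eq_mul_div, div_le_iff₀ hn]
    nlinarith
  calc |Cp i k| ≤ (1 + K / N2) ^ k * (K0 + 1) := by linarith
    _ ≤ exp (K * T) * (K0 + 1) := by
        gcongr
        exact (one_add_pow_le_exp_mul (by linarith [div_nonneg hK hn.le]) k).trans
          (exp_le_exp.mpr hkT)
    _ = (K0 + 1) * exp (K * T) := mul_comm _ _

/-- Uniform-in-`N₂` a priori bound on the outer-layer SGD weights (Lemma A.1, first part). -/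
theorem outer_weights_uniform_bound
    (T γ2 K K0 : ℝ) (hT : 0 < T) (hγ2l : 1/2 ≤ γ2) (hγ2r : γ2 < 1)
    (hK : 0 ≤ K) (hK0 : 0 ≤ K0) :
    ∃ C : ℝ, ∀ N2 : ℕ, 1 ≤ N2 → ∀ (α : ℝ) (Cp : ℕ → ℕ → ℝ),
      0 ≤ α → α ≤ (N2 : ℝ) ^ (-(2 - 2 * γ2)) →
      (∀ i k, 1 ≤ i → i ≤ N2 →
        |Cp i (k + 1)| ≤ |Cp i k| +
          K * (α / (N2 : ℝ) ^ γ2 +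
            α / (N2 : ℝ) ^ (2 * γ2) * ∑ m ∈ Finset.Icc 1 N2, |Cp m k|)) →
      (∀ i, 1 ≤ i → i ≤ N2 → |Cp i 0| ≤ K0) →
      ∀ i k, 1 ≤ i → i ≤ N2 → k ≤ ⌊T * (N2 : ℝ)⌋₊ → |Cp i k| ≤ C :=
  outer_weights_uniform_bound_general T γ2 K K0 hT hγ2r hK hK0
end

section
/- Let $T > 0$ and $\gamma_1, \gamma_2 \in [1/2, 1)$. Under the SGD updates with learning rates $\alpha_C^{N_1,N_2} = N_2^{-(2-2\gamma_2)}$, $\alpha_{W,1}^{N_1,N_2} = N_1^{-(1-2\gamma_1)} N_2^{-(3-2\gamma_2)}$, $\alpha_{W,2}^{N_1,N_2} = N_1^{-(1-2\gamma_1)} N_2^{-(2-2\gamma_2)}$, bounded smooth activation $\sigma$, bounded data, and i.i.d. compactly supported initial parameters, the one-step parameter increments satisfy: $|C^i_{k+1} - C^i_k| = O(N_2^{-1})$, $\|W^{1,j}_{k+1} - W^{1,j}_k\| = O(N_1^{-(1-\gamma_1)} N_2^{-1})$, and $|W^{2,j,i}_{k+1} - W^{2,j,i}_k| = O(N_1^{-(1-\gamma_1)}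 N_2^{-1})$, uniformly for $k \le \lfloor T N_2 \rfloor$. -/
open Finset

/-- Bound on the absolute value of a sum whose terms are uniformly bounded. -/
lemma sgd_sum_abs_le {s : Finset ℕ} {f : ℕ → ℝ} {M : ℝ} (hM : 0 ≤ M)
    (h : ∀ i ∈ s, |f i| ≤ M) : |∑ i ∈ s, f i| ≤ (s.card : ℝ) * M := by
  calc |∑ i ∈ s, f i| ≤ ∑ i ∈ s, |f i| := Finset.abs_sum_le_sum_abs _ _
    _ ≤ ∑ _i ∈ s, M := Finset.sum_le_sum h
    _ = (s.card : ℝ) * M := by rw [Finset.sum_const, nsmul_eq_mul]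

/-- Lemma A.1 (second part): orders of the one-step SGD parameter increments for the
two-layer scaled neural network, with the paper's choice of learning rates. -/
theorem sgd_increment_orders
    (d : ℕ) (T γ1 γ2 S D K : ℝ)
    (hT : 0 < T) (hγ1l : 1/2 ≤ γ1) (hγ1r : γ1 < 1) (hγ2l : 1/2 ≤ γ2) (hγ2r : γ2 < 1)
    (σ : ℝ → ℝ) (hσsmooth : ContDiff ℝ (⊤ : ℕ∞) σ)
    (hσbd : ∀ z, |σ z| ≤ S) (hσ'bd : ∀ z, |deriv σ z| ≤ S)
    (hS : 0 ≤ S) (hD : 0 ≤ D) (hK : 0 ≤ K) :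
    ∃ C : ℝ, ∀ N1 N2 : ℕ, 1 ≤ N1 → 1 ≤ N2 →
      ∀ (Cp : ℕ → ℕ → ℝ) (W1 : ℕ → ℕ → Fin d → ℝ) (W2 : ℕ → ℕ → ℕ → ℝ)
        (x : ℕ → Fin d → ℝ) (y : ℕ → ℝ)
        (Z2 : ℕ → ℕ → (Fin d → ℝ) → ℝ) (g : ℕ → (Fin d → ℝ) → ℝ),
      -- bounded data
      (∀ k, ‖x k‖ ≤ D ∧ |y k| ≤ D) →
      -- uniform parameter bound on the training horizon (first part of the lemma)
      (∀ k i j, k ≤ ⌊T * (N2 : ℝ)⌋₊ → |Cp k i| + ‖W1 k j‖ + |W2 k j i| ≤ K) →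
      -- the hidden-layer input and the network output
      (∀ k i v, Z2 k i v =
        (N1 : ℝ) ^ (-γ1) * ∑ j ∈ Finset.range N1, W2 k j i * σ (∑ l, W1 k j l * v l)) →
      (∀ k v, g k v = (N2 : ℝ) ^ (-γ2) * ∑ i ∈ Finset.range N2, Cp k i * σ (Z2 k i v)) →
      -- the SGD updates with learning rates
      -- `α_C = N2^(2γ2-2)`, `α_{W,1} = N1^(2γ1-1) N2^(2γ2-3)`, `α_{W,2} = N1^(2γ1-1) N2^(2γ2-2)`
      (∀ k i, Cp (k + 1) i = Cp k i +
        ((N2 : ℝ) ^ (2 * γ2 - 2) / (N2 : ℝ) ^ γ2) * (y k - g k (x k)) * σ (Z2 k i (x k))) →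
      (∀ k j l, W1 (k + 1) j l = W1 k j l +
        ((N1 : ℝ) ^ (2 * γ1 - 1) * (N2 : ℝ) ^ (2 * γ2 - 3) / (N1 : ℝ) ^ γ1) *
          (y k - g k (x k)) *
          ((N2 : ℝ) ^ (-γ2) *
            ∑ i ∈ Finset.range N2, Cp k i * deriv σ (Z2 k i (x k)) * W2 k j i) *
          deriv σ (∑ l', W1 k j l' * x k l') * x k l) →
      (∀ k j i, W2 (k + 1) j i = W2 k j i +
        ((N1 : ℝ) ^ (2 * γ1 - 1) * (N2 : ℝ) ^ (2 * γ2 - 2) /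
            ((N1 : ℝ) ^ γ1 * (N2 : ℝ) ^ γ2)) *
          (y k - g k (x k)) * Cp k i * deriv σ (Z2 k i (x k)) *
          σ (∑ l, W1 k j l * x k l)) →
      -- conclusion: increments are `O(N2⁻¹)`, `O(N1^{-(1-γ1)} N2⁻¹)`, `O(N1^{-(1-γ1)} N2⁻¹)`
      ∀ k i j, k ≤ ⌊T * (N2 : ℝ)⌋₊ →
        |Cp (k + 1) i - Cp k i| ≤ C / (N2 : ℝ) ∧
        ‖W1 (k + 1) j - W1 k j‖ ≤ C / ((N1 : ℝ) ^ (1 - γ1) * (N2 : ℝ)) ∧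
        |W2 (k + 1) j i - W2 k j i| ≤ C / ((N1 : ℝ) ^ (1 - γ1) * (N2 : ℝ)) := by
  refine ⟨S * (D + K * S) + S ^ 2 * D * K ^ 2 * (D + K * S) + S ^ 2 * K * (D + K * S), ?_⟩
  intro N1 N2 hN1 hN2 Cp W1 W2 x y Z2 g hdata hbound hZ2 hgdef hCupd hW1upd hW2upd k i j hk
  have hn1 : (1 : ℝ) ≤ (N1 : ℝ) := by exact_mod_cast hN1
  have hn2 : (1 : ℝ) ≤ (N2 : ℝ) := by exact_mod_cast hN2
  have hn1p : (0 : ℝ) < (N1 : ℝ) := lt_of_lt_of_le one_pos hn1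
  have hn2p : (0 : ℝ) < (N2 : ℝ) := lt_of_lt_of_le one_pos hn2
  have hDKS : (0 : ℝ) ≤ D + K * S := by positivity
  -- nonnegativity of the three basic constants
  have hB1 : (0 : ℝ) ≤ S * (D + K * S) := by positivity
  have hB2 : (0 : ℝ) ≤ S ^ 2 * D * K ^ 2 * (D + K * S) := by positivity
  have hB3 : (0 : ℝ) ≤ S ^ 2 * K * (D + K * S) := by positivity
  -- parameter bounds at time k
  have hCb : ∀ i', |Cp k i'| ≤ K := by
    intro i'
    have h := hbound k i' 0 hk
    have h1 := norm_nonneg (W1 k 0)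
    have h2 := abs_nonneg (W2 k 0 i')
    linarith
  have hW2b : ∀ j' i', |W2 k j' i'| ≤ K := by
    intro j' i'
    have h := hbound k i' j' hk
    have h1 := abs_nonneg (Cp k i')
    have h2 := norm_nonneg (W1 k j')
    linarith
  have hxb : ∀ l, |x k l| ≤ D := fun l =>
    le_trans (by simpa using norm_le_pi_norm (x k) l) (hdata k).1
  -- basic rpow facts
  have hone : (1 : ℝ) ≤ (N2 : ℝ) ^ (1 - γ2) := by
    calc (1 : ℝ) = (N2 : ℝ) ^ (0 : ℝ) := (Real.rpow_zero _).symm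
      _ ≤ (N2 : ℝ) ^ (1 - γ2) := Real.rpow_le_rpow_of_exponent_le hn2 (by linarith)
  -- bound on the network output
  have hgb : |g k (x k)| ≤ K * S * (N2 : ℝ) ^ (1 - γ2) := by
    rw [hgdef k (x k), abs_mul]
    have hsum : |∑ i' ∈ Finset.range N2, Cp k i' * σ (Z2 k i' (x k))| ≤ (N2 : ℝ) * (K * S) := by
      have h := sgd_sum_abs_le (s := Finset.range N2)
        (f := fun i' => Cp k i' * σ (Z2 k i' (x k))) (M := K * S) (by positivity)
        (fun i' _ => by
          rw [abs_mul]
          exact mul_le_mul (hCb i') (hσbd _) (abs_nonneg _) hK)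
      simpa using h
    calc |(N2 : ℝ) ^ (-γ2)| * |∑ i' ∈ Finset.range N2, Cp k i' * σ (Z2 k i' (x k))|
        ≤ (N2 : ℝ) ^ (-γ2) * ((N2 : ℝ) * (K * S)) := by
          rw [abs_of_nonneg (by positivity)]
          exact mul_le_mul_of_nonneg_left hsum (by positivity)
      _ = K * S * ((N2 : ℝ) ^ (-γ2) * (N2 : ℝ) ^ (1 : ℝ)) := by rw [Real.rpow_one]; ring
      _ = K * S * (N2 : ℝ) ^ (1 - γ2) := by
          rw [← Real.rpow_add hn2p, show -γ2 + 1 = 1 - γ2 by ring]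
  -- bound on the prediction error
  have herr : |y k - g k (x k)| ≤ (D + K * S) * (N2 : ℝ) ^ (1 - γ2) := by
    have h1 : |y k - g k (x k)| ≤ |y k| + |g k (x k)| := abs_sub _ _
    have h2 := (hdata k).2
    have h3 : D ≤ D * (N2 : ℝ) ^ (1 - γ2) := le_mul_of_one_le_right hD hone
    nlinarith [hgb]
  -- rewrite of the inverse powers for the conclusion
  have hn1inv : (N1 : ℝ) ^ (γ1 - 1) = ((N1 : ℝ) ^ (1 - γ1))⁻¹ := by
    rw [show γ1 - 1 = -(1 - γ1) by ring, Real.rpow_neg hn1p.le]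
  refine ⟨?_, ?_, ?_⟩
  -- ### first claim: increment of C
  · rw [hCupd k i, add_sub_cancel_left]
    have hcoef : |(N2 : ℝ) ^ (2 * γ2 - 2) / (N2 : ℝ) ^ γ2| = (N2 : ℝ) ^ (γ2 - 2) := by
      rw [abs_of_nonneg (by positivity), ← Real.rpow_sub hn2p,
        show 2 * γ2 - 2 - γ2 = γ2 - 2 by ring]
    calc |(N2 : ℝ) ^ (2 * γ2 - 2) / (N2 : ℝ) ^ γ2 * (y k - g k (x k)) * σ (Z2 k i (x k))|
        = |(N2 : ℝ) ^ (2 * γ2 - 2) / (N2 : ℝ) ^ γ2| * |y k - g k (x k)| *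
            |σ (Z2 k i (x k))| := by rw [abs_mul, abs_mul]
      _ ≤ (N2 : ℝ) ^ (γ2 - 2) * ((D + K * S) * (N2 : ℝ) ^ (1 - γ2)) * S := by
          rw [hcoef]
          exact mul_le_mul (mul_le_mul_of_nonneg_left herr (by positivity)) (hσbd _)
            (abs_nonneg _) (by positivity)
      _ = S * (D + K * S) * ((N2 : ℝ) ^ (γ2 - 2) * (N2 : ℝ) ^ (1 - γ2)) := by ring
      _ = S * (D + K * S) / (N2 : ℝ) := by
          rw [← Real.rpow_add hn2p, show γ2 - 2 + (1 - γ2) = (-1 : ℝ) by ring,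
            Real.rpow_neg_one]
          ring
      _ ≤ _ := by gcongr; linarith
  -- ### second claim: increment of W1
  · rw [pi_norm_le_iff_of_nonneg (by positivity)]
    intro l
    rw [Pi.sub_apply, Real.norm_eq_abs, hW1upd k j l, add_sub_cancel_left]
    have hcoef : |(N1 : ℝ) ^ (2 * γ1 - 1) * (N2 : ℝ) ^ (2 * γ2 - 3) / (N1 : ℝ) ^ γ1| =
        (N1 : ℝ) ^ (γ1 - 1) * (N2 : ℝ) ^ (2 * γ2 - 3) := by
      rw [abs_of_nonneg (by positivity),
        show (N1 : ℝ) ^ (2 * γ1 - 1) * (N2 : ℝ) ^ (2 * γ2 - 3) / (N1 : ℝ) ^ γ1 =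
          (N1 : ℝ) ^ (2 * γ1 - 1) / (N1 : ℝ) ^ γ1 * (N2 : ℝ) ^ (2 * γ2 - 3) by ring,
        ← Real.rpow_sub hn1p, show 2 * γ1 - 1 - γ1 = γ1 - 1 by ring]
    have hIb : |(N2 : ℝ) ^ (-γ2) *
        ∑ i' ∈ Finset.range N2, Cp k i' * deriv σ (Z2 k i' (x k)) * W2 k j i'| ≤
        K ^ 2 * S * (N2 : ℝ) ^ (1 - γ2) := by
      rw [abs_mul]
      have hsum : |∑ i' ∈ Finset.range N2, Cp k i' * deriv σ (Z2 k i' (x k)) * W2 k j i'| ≤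
          (N2 : ℝ) * (K * S * K) := by
        have h := sgd_sum_abs_le (s := Finset.range N2)
          (f := fun i' => Cp k i' * deriv σ (Z2 k i' (x k)) * W2 k j i')
          (M := K * S * K) (by positivity)
          (fun i' _ => by
            rw [abs_mul, abs_mul]
            exact mul_le_mul (mul_le_mul (hCb i') (hσ'bd _) (abs_nonneg _) hK)
              (hW2b j i') (abs_nonneg _) (by positivity))
        simpa using h
      calc |(N2 : ℝ) ^ (-γ2)| *
            |∑ i' ∈ Finset.range N2, Cp k i' * deriv σ (Z2 k i' (x k)) * W2 k j i'|
          ≤ (N2 : ℝ) ^ (-γ2) * ((N2 : ℝ) * (K * S * K)) := by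
            rw [abs_of_nonneg (by positivity)]
            exact mul_le_mul_of_nonneg_left hsum (by positivity)
        _ = K ^ 2 * S * ((N2 : ℝ) ^ (-γ2) * (N2 : ℝ) ^ (1 : ℝ)) := by
            rw [Real.rpow_one]; ring
        _ = K ^ 2 * S * (N2 : ℝ) ^ (1 - γ2) := by
            rw [← Real.rpow_add hn2p, show -γ2 + 1 = 1 - γ2 by ring]
    calc |(N1 : ℝ) ^ (2 * γ1 - 1) * (N2 : ℝ) ^ (2 * γ2 - 3) / (N1 : ℝ) ^ γ1 *
          (y k - g k (x k)) *
          ((N2 : ℝ) ^ (-γ2) *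
            ∑ i' ∈ Finset.range N2, Cp k i' * deriv σ (Z2 k i' (x k)) * W2 k j i') *
          deriv σ (∑ l', W1 k j l' * x k l') * x k l|
        = |(N1 : ℝ) ^ (2 * γ1 - 1) * (N2 : ℝ) ^ (2 * γ2 - 3) / (N1 : ℝ) ^ γ1| *
          |y k - g k (x k)| *
          |(N2 : ℝ) ^ (-γ2) *
            ∑ i' ∈ Finset.range N2, Cp k i' * deriv σ (Z2 k i' (x k)) * W2 k j i'| *
          |deriv σ (∑ l', W1 k j l' * x k l')| * |x k l| := by
          rw [abs_mul, abs_mul, abs_mul, abs_mul]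
      _ ≤ (N1 : ℝ) ^ (γ1 - 1) * (N2 : ℝ) ^ (2 * γ2 - 3) *
          ((D + K * S) * (N2 : ℝ) ^ (1 - γ2)) * (K ^ 2 * S * (N2 : ℝ) ^ (1 - γ2)) * S * D := by
          rw [hcoef]
          exact mul_le_mul (mul_le_mul (mul_le_mul
            (mul_le_mul_of_nonneg_left herr (by positivity)) hIb (abs_nonneg _)
            (by positivity)) (hσ'bd _) (abs_nonneg _) (by positivity)) (hxb l)
            (abs_nonneg _) (by positivity)
      _ = S ^ 2 * D * K ^ 2 * (D + K * S) * (N1 : ℝ) ^ (γ1 - 1) *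
          ((N2 : ℝ) ^ (2 * γ2 - 3) * (N2 : ℝ) ^ (1 - γ2) * (N2 : ℝ) ^ (1 - γ2)) := by ring
      _ = S ^ 2 * D * K ^ 2 * (D + K * S) / ((N1 : ℝ) ^ (1 - γ1) * (N2 : ℝ)) := by
          rw [← Real.rpow_add hn2p, ← Real.rpow_add hn2p,
            show 2 * γ2 - 3 + (1 - γ2) + (1 - γ2) = (-1 : ℝ) by ring, Real.rpow_neg_one,
            hn1inv]
          ring
      _ ≤ _ := by gcongr; linarith
  -- ### third claim: increment of W2
  · rw [hW2upd k j i, add_sub_cancel_left]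
    have hcoef : |(N1 : ℝ) ^ (2 * γ1 - 1) * (N2 : ℝ) ^ (2 * γ2 - 2) /
          ((N1 : ℝ) ^ γ1 * (N2 : ℝ) ^ γ2)| =
        (N1 : ℝ) ^ (γ1 - 1) * (N2 : ℝ) ^ (γ2 - 2) := by
      rw [abs_of_nonneg (by positivity),
        show (N1 : ℝ) ^ (2 * γ1 - 1) * (N2 : ℝ) ^ (2 * γ2 - 2) /
            ((N1 : ℝ) ^ γ1 * (N2 : ℝ) ^ γ2) =
          (N1 : ℝ) ^ (2 * γ1 - 1) / (N1 : ℝ) ^ γ1 *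
            ((N2 : ℝ) ^ (2 * γ2 - 2) / (N2 : ℝ) ^ γ2) by ring,
        ← Real.rpow_sub hn1p, ← Real.rpow_sub hn2p,
        show 2 * γ1 - 1 - γ1 = γ1 - 1 by ring, show 2 * γ2 - 2 - γ2 = γ2 - 2 by ring]
    calc |(N1 : ℝ) ^ (2 * γ1 - 1) * (N2 : ℝ) ^ (2 * γ2 - 2) /
            ((N1 : ℝ) ^ γ1 * (N2 : ℝ) ^ γ2) *
          (y k - g k (x k)) * Cp k i * deriv σ (Z2 k i (x k)) *
          σ (∑ l, W1 k j l * x k l)|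
        = |(N1 : ℝ) ^ (2 * γ1 - 1) * (N2 : ℝ) ^ (2 * γ2 - 2) /
            ((N1 : ℝ) ^ γ1 * (N2 : ℝ) ^ γ2)| *
          |y k - g k (x k)| * |Cp k i| * |deriv σ (Z2 k i (x k))| *
          |σ (∑ l, W1 k j l * x k l)| := by
          rw [abs_mul, abs_mul, abs_mul, abs_mul]
      _ ≤ (N1 : ℝ) ^ (γ1 - 1) * (N2 : ℝ) ^ (γ2 - 2) *
          ((D + K * S) * (N2 : ℝ) ^ (1 - γ2)) * K * S * S := by
          rw [hcoef]
          exact mul_le_mul (mul_le_mul (mul_le_mul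
            (mul_le_mul_of_nonneg_left herr (by positivity)) (hCb i) (abs_nonneg _)
            (by positivity)) (hσ'bd _) (abs_nonneg _) (by positivity)) (hσbd _)
            (abs_nonneg _) (by positivity)
      _ = S ^ 2 * K * (D + K * S) * (N1 : ℝ) ^ (γ1 - 1) *
          ((N2 : ℝ) ^ (γ2 - 2) * (N2 : ℝ) ^ (1 - γ2)) := by ring
      _ = S ^ 2 * K * (D + K * S) / ((N1 : ℝ) ^ (1 - γ1) * (N2 : ℝ)) := by
          rw [← Real.rpow_add hn2p, show γ2 - 2 + (1 - γ2) = (-1 : ℝ) by ring,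
            Real.rpow_neg_one, hn1inv]
          ring
      _ ≤ _ := by gcongr; linarith
end

section
/- Let $g: \mathbb{R} \times \mathbb{R}^{N_1} \times (\mathbb{R}^d)^{N_1} \to \mathbb{R}$ be given by $g(c, w^2, w^1) = c\,\sigma\left(N_1^{-\gamma_1} \sum_{j=1}^{N_1} w^{2,j} \sigma(\langle w^{1,j}, x\rangle)\right)$ with $\sigma \in C^2$ bounded with bounded first and second derivatives, and suppose all parameters range over a compact set. Then, for parameter updates $\Delta c, \Delta w^{2,j}, \Delta w^{1,j}$ with $|\Delta c| \le \epsilon_1$, $|\Delta w^{2,j}| \le \epsilon_2$, $\|\Delta w^{1,j}\| \le \epsilon_2$ for all $j$, the second-order Taylor remainder of $g$ satisfies $\left|g(\theta + \Delta\theta) - g(\theta) - \nabla g(\theta)\cdot \Delta\theta\right| \le C\left(\epsilon_1 N_1^{1-\gamma_1}\epsilon_2 + N_1^{2(1-\gamma_1)}\epsilon_2^2\right)$ for a constant $C$ depending only on the bounds for $\sigma$, its derivatives, $x$, and the compact parameter set. -/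
/-!
Write `g θ = c * σ u` with `u = N^(-γ) * ∑ⱼ w²ⱼ * σ ⟪w¹ⱼ, x⟫`. Each hidden neuron moves by
`O(ε₂)` and differs from its linearisation by `O(ε₂²)`; averaging `N` of them with weight `N^(-γ)`
gives an increment `δ` of `u` of size `O(N^(1-γ) ε₂)` that differs from the directional derivative
`D` of `u` by `O(N^(1-γ) ε₂²)`. For the output neuron the remainder is then bounded by
`|Δc| |δ| + |c| δ² + |c| |δ - D|`, which is `O(ε₁ N^(1-γ) ε₂ + N^(2(1-γ)) ε₂²)` because
`N^(1-γ) ≤ N^(2(1-γ))`.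
-/

open Finset Matrix

section Calculus

variable {f : ℝ → ℝ} {S : ℝ}

theorem abs_sub_le_of_abs_deriv_le (hf : Differentiable ℝ f) (hS : ∀ z, |deriv f z| ≤ S)
    (a b : ℝ) : |f b - f a| ≤ S * |b - a| := by
  simpa using convex_univ.norm_image_sub_le_of_norm_deriv_le (fun z _ => hf z)
    (fun z _ => hS z) (Set.mem_univ a) (Set.mem_univ b)

theorem abs_sub_sub_deriv_mul_le (hf : Differentiable ℝ f) (hf' : Differentiable ℝ (deriv f))
    (hS : ∀ z, |deriv (deriv f) z| ≤ S) (a h : ℝ) :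
    |f (a + h) - f a - deriv f a * h| ≤ S * h ^ 2 := by
  have hderiv : ∀ z, HasDerivAt (fun z => f z - deriv f a * z) (deriv f z - deriv f a) z :=
    fun z => (hf z).hasDerivAt.sub ((hasDerivAt_id z).const_mul _ |>.congr_deriv (mul_one _))
  have hbound : ∀ z ∈ Set.uIcc a (a + h), ‖deriv f z - deriv f a‖ ≤ S * |h| := fun z hz => by
    have hza : |z - a| ≤ |h| := by
      simpa using Set.abs_sub_left_of_mem_uIcc hz
    calc ‖deriv f z - deriv f a‖ ≤ S * |z - a| := abs_sub_le_of_abs_deriv_le hf' hS a z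
      _ ≤ S * |h| := mul_le_mul_of_nonneg_left hza ((abs_nonneg _).trans (hS 0))
  have hmvt := Convex.norm_image_sub_le_of_norm_hasDerivWithin_le
    (fun z _ => (hderiv z).hasDerivWithinAt) hbound (convex_uIcc _ _) Set.left_mem_uIcc
    Set.right_mem_uIcc
  simp only [Real.norm_eq_abs, add_sub_cancel_left] at hmvt
  calc |f (a + h) - f a - deriv f a * h|
      = |f (a + h) - deriv f a * (a + h) - (f a - deriv f a * a)| := by ring_nf
    _ ≤ S * |h| * |h| := hmvt
    _ = S * h ^ 2 := by rw [mul_assoc, ← abs_mul, ← sq, abs_sq]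

theorem abs_mul_comp_add_sub_le (hf : Differentiable ℝ f) (hbd : ∀ z, |f z| ≤ S)
    (hbd' : ∀ z, |deriv f z| ≤ S) (w Δw a b : ℝ) :
    |(w + Δw) * f (a + b) - w * f a| ≤ S * (|Δw| + |w| * |b|) := by
  have hlip : |f (a + b) - f a| ≤ S * |b| := by
    simpa using abs_sub_le_of_abs_deriv_le hf hbd' a (a + b)
  calc |(w + Δw) * f (a + b) - w * f a|
      = |Δw * f (a + b) + w * (f (a + b) - f a)| := by ring_nf
    _ ≤ |Δw| * |f (a + b)| + |w| * |f (a + b) - f a| := by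
      rw [← abs_mul, ← abs_mul]; exact abs_add_le _ _
    _ ≤ |Δw| * S + |w| * (S * |b|) := by gcongr; exact hbd _
    _ = S * (|Δw| + |w| * |b|) := by ring

theorem abs_mul_comp_add_sub_sub_le (hf : Differentiable ℝ f)
    (hf' : Differentiable ℝ (deriv f)) (hbd' : ∀ z, |deriv f z| ≤ S)
    (hbd'' : ∀ z, |deriv (deriv f) z| ≤ S) (w Δw a b : ℝ) :
    |(w + Δw) * f (a + b) - w * f a - (Δw * f a + w * (deriv f a * b))|
      ≤ S * (|Δw| * |b| + |w| * b ^ 2) := by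
  have hlip : |f (a + b) - f a| ≤ S * |b| := by
    simpa using abs_sub_le_of_abs_deriv_le hf hbd' a (a + b)
  calc |(w + Δw) * f (a + b) - w * f a - (Δw * f a + w * (deriv f a * b))|
      = |Δw * (f (a + b) - f a) + w * (f (a + b) - f a - deriv f a * b)| := by ring_nf
    _ ≤ |Δw| * |f (a + b) - f a| + |w| * |f (a + b) - f a - deriv f a * b| := by
      rw [← abs_mul, ← abs_mul]; exact abs_add_le _ _
    _ ≤ |Δw| * (S * |b|) + |w| * (S * b ^ 2) := by
      gcongr; exact abs_sub_sub_deriv_mul_le hf hf' hbd'' a b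
    _ = S * (|Δw| * |b| + |w| * b ^ 2) := by ring

theorem abs_mul_comp_add_sub_sub_le_add (hf : Differentiable ℝ f)
    (hf' : Differentiable ℝ (deriv f)) (hbd' : ∀ z, |deriv f z| ≤ S)
    (hbd'' : ∀ z, |deriv (deriv f) z| ≤ S) (w Δw a b b' : ℝ) :
    |(w + Δw) * f (a + b) - w * f a - (Δw * f a + w * (deriv f a * b'))|
      ≤ S * (|Δw| * |b| + |w| * b ^ 2) + S * (|w| * |b - b'|) := by
  calc |(w + Δw) * f (a + b) - w * f a - (Δw * f a + w * (deriv f a * b'))|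
      = |((w + Δw) * f (a + b) - w * f a - (Δw * f a + w * (deriv f a * b)))
          + w * (deriv f a * (b - b'))| := by ring_nf
    _ ≤ |(w + Δw) * f (a + b) - w * f a - (Δw * f a + w * (deriv f a * b))|
          + |w| * (|deriv f a| * |b - b'|) := by
      rw [← abs_mul (deriv f a), ← abs_mul w]; exact abs_add_le _ _
    _ ≤ S * (|Δw| * |b| + |w| * b ^ 2) + |w| * (S * |b - b'|) :=
      add_le_add (abs_mul_comp_add_sub_sub_le hf hf' hbd' hbd'' w Δw a b) (by gcongr; exact hbd' a)
    _ = S * (|Δw| * |b| + |w| * b ^ 2) + S * (|w| * |b - b'|) := by ring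

theorem hasDerivAt_affine_mul_comp {A : ℝ → ℝ} {A' : ℝ} (w Δw : ℝ)
    (hf : DifferentiableAt ℝ f (A 0)) (hA : HasDerivAt A A' 0) :
    HasDerivAt (fun t => (w + t * Δw) * f (A t)) (Δw * f (A 0) + w * (deriv f (A 0) * A')) 0 := by
  have hw : HasDerivAt (fun t : ℝ => w + t * Δw) Δw 0 := by
    simpa using ((hasDerivAt_id (0 : ℝ)).mul_const Δw).const_add w
  simpa only [zero_mul, add_zero, Function.comp_apply] using
    hw.fun_mul (hf.hasDerivAt.comp 0 hA)

end Calculus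

theorem abs_rpow_neg_mul_sum_le {N : ℕ} (hN : 0 < N) (γ M : ℝ) (t : Fin N → ℝ)
    (ht : ∀ j, |t j| ≤ M) : |(N : ℝ) ^ (-γ) * ∑ j, t j| ≤ (N : ℝ) ^ (1 - γ) * M := by
  have hNpos : (0 : ℝ) < N := Nat.cast_pos.mpr hN
  have hsum : |∑ j, t j| ≤ N * M := by
    simpa using (abs_sum_le_sum_abs t univ).trans (sum_le_card_nsmul univ _ M fun j _ => ht j)
  calc |(N : ℝ) ^ (-γ) * ∑ j, t j| ≤ (N : ℝ) ^ (-γ) * (N * M) := by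
        rw [abs_mul, abs_of_pos (Real.rpow_pos_of_pos hNpos _)]; gcongr
    _ = (N : ℝ) ^ (1 - γ) * M := by
        rw [sub_eq_neg_add, Real.rpow_add hNpos, Real.rpow_one, mul_assoc]

theorem abs_dotProduct_le {d : ℕ} (v x : Fin d → ℝ) : |v ⬝ᵥ x| ≤ d * (‖v‖ * ‖x‖) := by
  have hterm : ∀ l, |v l * x l| ≤ ‖v‖ * ‖x‖ := fun l => by
    rw [abs_mul]
    exact mul_le_mul (norm_le_pi_norm v l) (norm_le_pi_norm x l) (abs_nonneg _) (norm_nonneg _)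
  simpa [dotProduct] using
    (abs_sum_le_sum_abs _ univ).trans (sum_le_card_nsmul univ _ _ fun l _ => hterm l)

section Network

variable {d N : ℕ} (σ : ℝ → ℝ) (x : Fin d → ℝ) (s : ℝ)

def hiddenLayer (w₂ : Fin N → ℝ) (w₁ : Fin N → Fin d → ℝ) : ℝ :=
  s * ∑ j, w₂ j * σ (w₁ j ⬝ᵥ x)

noncomputable def hiddenLayerDeriv (w₂ Δw₂ : Fin N → ℝ) (w₁ Δw₁ : Fin N → Fin d → ℝ) : ℝ :=
  s * ∑ j, (Δw₂ j * σ (w₁ j ⬝ᵥ x) + w₂ j * (deriv σ (w₁ j ⬝ᵥ x) * (Δw₁ j ⬝ᵥ x)))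

theorem hiddenLayer_add_sub (w₂ Δw₂ : Fin N → ℝ) (w₁ Δw₁ : Fin N → Fin d → ℝ) :
    hiddenLayer σ x s (w₂ + Δw₂) (w₁ + Δw₁) - hiddenLayer σ x s w₂ w₁
      = s * ∑ j, ((w₂ j + Δw₂ j) * σ (w₁ j ⬝ᵥ x + Δw₁ j ⬝ᵥ x) - w₂ j * σ (w₁ j ⬝ᵥ x)) := by
  simp only [hiddenLayer, ← mul_sub, ← sum_sub_distrib, Pi.add_apply, add_dotProduct]

variable {σ}

theorem hasDerivAt_hiddenLayer_line (hσ : Differentiable ℝ σ) (w₂ Δw₂ : Fin N → ℝ)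
    (w₁ Δw₁ : Fin N → Fin d → ℝ) :
    HasDerivAt (fun t : ℝ => hiddenLayer σ x s (w₂ + t • Δw₂) (w₁ + t • Δw₁))
      (hiddenLayerDeriv σ x s w₂ Δw₂ w₁ Δw₁) 0 := by
  have hpre : ∀ j, HasDerivAt (fun t : ℝ => w₁ j ⬝ᵥ x + t * (Δw₁ j ⬝ᵥ x)) (Δw₁ j ⬝ᵥ x) 0 :=
    fun j => by simpa using ((hasDerivAt_id (0 : ℝ)).mul_const _).const_add (w₁ j ⬝ᵥ x)
  have hneuron := fun j => hasDerivAt_affine_mul_comp (w₂ j) (Δw₂ j) (hσ _) (hpre j)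
  simp only [zero_mul, add_zero] at hneuron
  simpa [hiddenLayer, hiddenLayerDeriv, add_dotProduct, smul_dotProduct] using
    (HasDerivAt.fun_sum fun j _ => hneuron j).const_mul s

theorem fderiv_network_apply (hσ : Differentiable ℝ σ)
    (θ Δθ : ℝ × (Fin N → ℝ) × (Fin N → Fin d → ℝ)) :
    fderiv ℝ (fun p : ℝ × (Fin N → ℝ) × (Fin N → Fin d → ℝ) =>
        p.1 * σ (hiddenLayer σ x s p.2.1 p.2.2)) θ Δθ
      = Δθ.1 * σ (hiddenLayer σ x s θ.2.1 θ.2.2) + θ.1 * (deriv σ (hiddenLayer σ x s θ.2.1 θ.2.2)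
          * hiddenLayerDeriv σ x s θ.2.1 Δθ.2.1 θ.2.2 Δθ.2.2) := by
  have hdiff : DifferentiableAt ℝ (fun p : ℝ × (Fin N → ℝ) × (Fin N → Fin d → ℝ) =>
      p.1 * σ (hiddenLayer σ x s p.2.1 p.2.2)) θ := by
    unfold hiddenLayer dotProduct; fun_prop
  have hline := hasDerivAt_affine_mul_comp θ.1 Δθ.1 (hσ _)
    (hasDerivAt_hiddenLayer_line x s hσ θ.2.1 Δθ.2.1 θ.2.2 Δθ.2.2)
  simp only [zero_smul, add_zero] at hline
  exact (hdiff.hasFDerivAt.hasLineDerivAt Δθ).unique hline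

variable {S K b ε γ : ℝ} {w₂ Δw₂ : Fin N → ℝ} {w₁ Δw₁ : Fin N → Fin d → ℝ}

theorem abs_hiddenLayer_add_sub_le (hN : 0 < N) (hσ : Differentiable ℝ σ)
    (hσbd : ∀ z, |σ z| ≤ S) (hσ'bd : ∀ z, |deriv σ z| ≤ S) (hw₂ : ∀ j, |w₂ j| ≤ K)
    (hΔw₂ : ∀ j, |Δw₂ j| ≤ ε) (hΔw₁ : ∀ j, |Δw₁ j ⬝ᵥ x| ≤ b) :
    |hiddenLayer σ x ((N : ℝ) ^ (-γ)) (w₂ + Δw₂) (w₁ + Δw₁)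
        - hiddenLayer σ x ((N : ℝ) ^ (-γ)) w₂ w₁| ≤ (N : ℝ) ^ (1 - γ) * (S * (ε + K * b)) := by
  rw [hiddenLayer_add_sub]
  refine abs_rpow_neg_mul_sum_le hN γ _ _ fun j => ?_
  have hS : 0 ≤ S := (abs_nonneg _).trans (hσbd 0)
  have hK : 0 ≤ K := (abs_nonneg _).trans (hw₂ j)
  calc _ ≤ S * (|Δw₂ j| + |w₂ j| * |Δw₁ j ⬝ᵥ x|) := abs_mul_comp_add_sub_le hσ hσbd hσ'bd _ _ _ _
    _ ≤ S * (ε + K * b) := by gcongr; exacts [hΔw₂ j, hw₂ j, hΔw₁ j]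

theorem abs_hiddenLayer_add_sub_sub_le (hN : 0 < N) (hσ : Differentiable ℝ σ)
    (hσ' : Differentiable ℝ (deriv σ)) (hσ'bd : ∀ z, |deriv σ z| ≤ S)
    (hσ''bd : ∀ z, |deriv (deriv σ) z| ≤ S) (hw₂ : ∀ j, |w₂ j| ≤ K)
    (hΔw₂ : ∀ j, |Δw₂ j| ≤ ε) (hΔw₁ : ∀ j, |Δw₁ j ⬝ᵥ x| ≤ b) :
    |hiddenLayer σ x ((N : ℝ) ^ (-γ)) (w₂ + Δw₂) (w₁ + Δw₁)
        - hiddenLayer σ x ((N : ℝ) ^ (-γ)) w₂ w₁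
        - hiddenLayerDeriv σ x ((N : ℝ) ^ (-γ)) w₂ Δw₂ w₁ Δw₁|
      ≤ (N : ℝ) ^ (1 - γ) * (S * (ε * b + K * b ^ 2)) := by
  rw [hiddenLayer_add_sub, hiddenLayerDeriv, ← mul_sub, ← sum_sub_distrib]
  refine abs_rpow_neg_mul_sum_le hN γ _ _ fun j => ?_
  have hS : 0 ≤ S := (abs_nonneg _).trans (hσ'bd 0)
  have hK : 0 ≤ K := (abs_nonneg _).trans (hw₂ j)
  have hε : 0 ≤ ε := (abs_nonneg _).trans (hΔw₂ j)
  calc _ ≤ S * (|Δw₂ j| * |Δw₁ j ⬝ᵥ x| + |w₂ j| * (Δw₁ j ⬝ᵥ x) ^ 2) :=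
        abs_mul_comp_add_sub_sub_le hσ hσ' hσ'bd hσ''bd _ _ _ _
    _ ≤ S * (ε * b + K * b ^ 2) := by
        rw [← sq_abs (Δw₁ j ⬝ᵥ x)]; gcongr; exacts [hΔw₂ j, hΔw₁ j, hw₂ j, hΔw₁ j]

end Network

theorem taylor_remainder_bound_general
    (d : ℕ) (σ : ℝ → ℝ) (S K R : ℝ)
    (hσC2 : ContDiff ℝ 2 σ)
    (hσbd : ∀ z, |σ z| ≤ S) (hσ'bd : ∀ z, |deriv σ z| ≤ S)
    (hσ''bd : ∀ z, |deriv (deriv σ) z| ≤ S)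
    (x : Fin d → ℝ) (hx : ‖x‖ ≤ R) :
    ∃ C : ℝ, ∀ N1 : ℕ, 1 ≤ N1 → ∀ γ1 : ℝ, 1/2 ≤ γ1 → γ1 ≤ 1 →
      ∀ (θ Δθ : ℝ × (Fin N1 → ℝ) × (Fin N1 → Fin d → ℝ)) (ε1 ε2 : ℝ),
        0 ≤ ε1 → 0 ≤ ε2 →
        |θ.1| ≤ K → (∀ j, |θ.2.1 j| ≤ K) → (∀ j, ‖θ.2.2 j‖ ≤ K) →
        |(θ + Δθ).1| ≤ K → (∀ j, |(θ + Δθ).2.1 j| ≤ K) → (∀ j, ‖(θ + Δθ).2.2 j‖ ≤ K) →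
        |Δθ.1| ≤ ε1 → (∀ j, |Δθ.2.1 j| ≤ ε2) → (∀ j, ‖Δθ.2.2 j‖ ≤ ε2) →
        (let g : ℝ × (Fin N1 → ℝ) × (Fin N1 → Fin d → ℝ) → ℝ := fun p =>
            p.1 * σ ((N1 : ℝ) ^ (-γ1) * ∑ j, p.2.1 j * σ (∑ l, p.2.2 j l * x l));
          |g (θ + Δθ) - g θ - fderiv ℝ g θ Δθ|
            ≤ C * (ε1 * (N1 : ℝ) ^ (1 - γ1) * ε2 + (N1 : ℝ) ^ (2 * (1 - γ1)) * ε2 ^ 2)) := by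
  have hσ : Differentiable ℝ σ := hσC2.differentiable (by norm_num)
  have hσ' : Differentiable ℝ (deriv σ) := hσC2.differentiable_deriv_two
  set B : ℝ := d * R
  set M : ℝ := S * (1 + K * B)
  refine ⟨S * M * (1 + K * (M + B)), ?_⟩
  intro N hN γ _ hγ θ Δθ ε1 ε2 hε1 hε2 hc hw₂ _ _ _ _ hΔc hΔw₂ hΔw₁ g
  set P : ℝ := (N : ℝ) ^ (1 - γ)
  have hP : 1 ≤ P := Real.one_le_rpow (by exact_mod_cast hN) (by linarith)
  have hb : ∀ j, |Δθ.2.2 j ⬝ᵥ x| ≤ d * (ε2 * R) := fun j =>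
    (abs_dotProduct_le _ _).trans (by gcongr; exact hΔw₁ j)
  set u := hiddenLayer σ x ((N : ℝ) ^ (-γ)) θ.2.1 θ.2.2
  set δ := hiddenLayer σ x ((N : ℝ) ^ (-γ)) (θ.2.1 + Δθ.2.1) (θ.2.2 + Δθ.2.2) - u
  set D := hiddenLayerDeriv σ x ((N : ℝ) ^ (-γ)) θ.2.1 Δθ.2.1 θ.2.2 Δθ.2.2
  have hδ : |δ| ≤ P * (M * ε2) :=
    (abs_hiddenLayer_add_sub_le x hN hσ hσbd hσ'bd hw₂ hΔw₂ hb).trans_eq (by ring)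
  have hδD : |δ - D| ≤ P * (B * M * ε2 ^ 2) :=
    (abs_hiddenLayer_add_sub_sub_le x hN hσ hσ' hσ'bd hσ''bd hw₂ hΔw₂ hb).trans_eq (by ring)
  have hremainder : g (θ + Δθ) - g θ - fderiv ℝ g θ Δθ
      = (θ.1 + Δθ.1) * σ (u + δ) - θ.1 * σ u - (Δθ.1 * σ u + θ.1 * (deriv σ u * D)) := by
    rw [show fderiv ℝ g θ Δθ = _ from fderiv_network_apply x _ hσ θ Δθ, add_sub_cancel]; rfl
  have hK : 0 ≤ K := (abs_nonneg _).trans hc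
  have hS : 0 ≤ S := (abs_nonneg _).trans (hσbd 0)
  have hR : 0 ≤ R := (norm_nonneg _).trans hx
  rw [hremainder, mul_comm 2, Real.rpow_mul (Nat.cast_nonneg _), Real.rpow_two]
  calc _ ≤ S * (|Δθ.1| * |δ| + |θ.1| * δ ^ 2) + S * (|θ.1| * |δ - D|) :=
        abs_mul_comp_add_sub_sub_le_add hσ hσ' hσ'bd hσ''bd _ _ _ _ _
    _ ≤ S * (ε1 * (P * (M * ε2)) + K * (P * (M * ε2)) ^ 2)
          + S * (K * (P * (B * M * ε2 ^ 2))) := by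
        rw [← sq_abs δ]; gcongr
    _ ≤ S * M * (1 + K * (M + B)) * (ε1 * P * ε2 + P ^ 2 * ε2 ^ 2) := by
        have hP_le_sq : S * K * B * M * P * ε2 ^ 2 ≤ S * K * B * M * P ^ 2 * ε2 ^ 2 := by
          gcongr; nlinarith
        have hε1_term : 0 ≤ S * M * K * (M + B) * (ε1 * P * ε2) := by positivity
        have hε2_term : 0 ≤ S * M * (P ^ 2 * ε2 ^ 2) := by positivity
        linarith

/-- Second-order Taylor remainder bound for the single-neuron output map of the
two-layer network (the remainder `R^{N₁,N₂}` in Appendix B.1). -/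
theorem taylor_remainder_bound
    (d : ℕ) (σ : ℝ → ℝ) (S K R : ℝ)
    (hσC2 : ContDiff ℝ 2 σ)
    (hσbd : ∀ z, |σ z| ≤ S) (hσ'bd : ∀ z, |deriv σ z| ≤ S)
    (hσ''bd : ∀ z, |deriv (deriv σ) z| ≤ S)
    (x : Fin d → ℝ) (hx : ‖x‖ ≤ R)
    (hS : 0 ≤ S) (hK : 0 ≤ K) (hR : 0 ≤ R) :
    ∃ C : ℝ, ∀ N1 : ℕ, 1 ≤ N1 → ∀ γ1 : ℝ, 1/2 ≤ γ1 → γ1 ≤ 1 →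
      ∀ (θ Δθ : ℝ × (Fin N1 → ℝ) × (Fin N1 → Fin d → ℝ)) (ε1 ε2 : ℝ),
        0 ≤ ε1 → 0 ≤ ε2 →
        |θ.1| ≤ K → (∀ j, |θ.2.1 j| ≤ K) → (∀ j, ‖θ.2.2 j‖ ≤ K) →
        |(θ + Δθ).1| ≤ K → (∀ j, |(θ + Δθ).2.1 j| ≤ K) → (∀ j, ‖(θ + Δθ).2.2 j‖ ≤ K) →
        |Δθ.1| ≤ ε1 → (∀ j, |Δθ.2.1 j| ≤ ε2) → (∀ j, ‖Δθ.2.2 j‖ ≤ ε2) →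
        (let g : ℝ × (Fin N1 → ℝ) × (Fin N1 → Fin d → ℝ) → ℝ := fun p =>
            p.1 * σ ((N1 : ℝ) ^ (-γ1) * ∑ j, p.2.1 j * σ (∑ l, p.2.2 j l * x l));
          |g (θ + Δθ) - g θ - fderiv ℝ g θ Δθ|
            ≤ C * (ε1 * (N1 : ℝ) ^ (1 - γ1) * ε2 + (N1 : ℝ) ^ (2 * (1 - γ1)) * ε2 ^ 2)) :=
  taylor_remainder_bound_general d σ S K R hσC2 hσbd hσ'bd hσ''bd x hx
end
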